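/- For every λ ∈ ℝ, the identity (1 + λ²)²·(1 − Re(u(λ, −λ)·v(λ, −λ))) = (λ² − 3)²·(1 − Re u(λ, −λ)) holds; consequently, whenever 1 − Re u(λ, −λ) ≠ 0, the weight satisfies w(λ, −λ) = (λ² − 3)²/(1 + λ²)². -/
import Mathlib


open Complex Filter

/-- `u(λ₁, λ₂)` from the hardcore-limit three-point correlator. -/
noncomputable def ufun (l1 l2 : ℝ) : ℂ :=
  ((((1 + l1 ^ 2) * (1 + l2 ^ 2)) / ((l1 - l2) ^ 2 + 4) : ℝ) : ℂ) *
    ((Complex.I * ((l1 : ℂ) - (l2 : ℂ)) + 2) /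
      ((1 + Complex.I * (l1 : ℂ)) * (1 - Complex.I * (l2 : ℂ)))) ^ 2

/-- `v(λ₁, λ₂)`: the value of the weight factor when the majority-fermion coordinate lies
strictly between the two impurity positions. -/
noncomputable def vwfun (l1 l2 : ℝ) : ℂ :=
  ((Complex.I * (l1 : ℂ) - 1) * (Complex.I * (l2 : ℂ) + 1)) /
    ((Complex.I * (l1 : ℂ) + 1) * (Complex.I * (l2 : ℂ) - 1))

/-- The weight `w(λ₁, λ₂) = (1 − Re (u·v))/(1 − Re u)`. -/
noncomputable def wfun (l1 l2 : ℝ) : ℝ :=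
  (1 - (ufun l1 l2 * vwfun l1 l2).re) / (1 - (ufun l1 l2).re)

lemma hden_aux (lam : ℝ) : ((1:ℂ) + Complex.I * lam) ≠ 0 := by
  intro h
  have := congrArg Complex.re h
  simp at this

lemma hu_aux (lam : ℝ) : ufun lam (-lam) =
    (((1 - lam^2)/(1+lam^2) : ℝ) : ℂ) + (((-2*lam)/(1+lam^2) : ℝ) : ℂ) * Complex.I := by
  have h := hden_aux lam
  have h2 : ((1:ℝ)+lam^2) ≠ 0 := by positivity
  have hp : ((1:ℂ) + I*lam)^2 ≠ 0 := pow_ne_zero _ h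
  unfold ufun
  have e3 : (((1 + lam^2)*(1+(-lam)^2)/((lam - -lam)^2+4) : ℝ)) = (1+lam^2)/4 := by
    rw [div_eq_div_iff (by positivity) (by norm_num)]
    ring
  rw [e3]
  simp only [Complex.ofReal_neg]
  rw [show Complex.I*((lam:ℂ) - -(lam:ℂ)) + 2 = 2*(1+Complex.I*lam) from by ring,
      show ((1:ℂ) + Complex.I * lam) * (1 - Complex.I * -(lam:ℂ)) = (1+Complex.I*lam)*(1+Complex.I*lam) from by ring,
      mul_div_mul_right _ _ h, div_pow, ← mul_div_assoc, div_eq_iff hp]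
  have h2' : ((1:ℂ)+(lam:ℂ)^2) ≠ 0 := by
    have : (((1+lam^2 : ℝ)):ℂ) ≠ 0 := by exact_mod_cast h2
    push_cast at this; exact this
  push_cast
  field_simp [h2']
  ring_nf
  simp only [show (Complex.I)^3 = -Complex.I from by
    rw [pow_succ, Complex.I_sq]; ring, Complex.I_sq]
  ring

lemma hv_aux (lam : ℝ) : vwfun lam (-lam) =
    (1 - Complex.I*lam)^2 / (1 + Complex.I*lam)^2 := by
  have h := hden_aux lam
  have hp : ((1:ℂ) + I*lam)^2 ≠ 0 := pow_ne_zero _ h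
  unfold vwfun
  have hd : (Complex.I * (lam:ℂ) + 1) * (Complex.I * ((-lam : ℝ):ℂ) - 1) ≠ 0 := by
    push_cast
    rw [show (Complex.I * (lam:ℂ) + 1) * (Complex.I * -(lam:ℂ) - 1) = -((1+Complex.I*lam)^2) from by ring]
    simpa using hp
  rw [div_eq_div_iff hd hp]
  push_cast
  ring

lemma huv_aux (lam : ℝ) : ufun lam (-lam) * vwfun lam (-lam) =
    ((((1-lam^2)^3 - 3*(1-lam^2)*(2*lam)^2)/(1+lam^2)^3 : ℝ) : ℂ) +
    (((3*(1-lam^2)^2*(-2*lam) - (-2*lam)^3)/(1+lam^2)^3 : ℝ) : ℂ) * Complex.I := by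
  have h := hden_aux lam
  have h2 : ((1:ℝ)+lam^2) ≠ 0 := by positivity
  have hp : ((1:ℂ) + I*lam)^2 ≠ 0 := pow_ne_zero _ h
  have h2' : ((1:ℂ)+(lam:ℂ)^2) ≠ 0 := by
    have : (((1+lam^2 : ℝ)):ℂ) ≠ 0 := by exact_mod_cast h2
    push_cast at this; exact this
  rw [hu_aux, hv_aux, ← mul_div_assoc, div_eq_iff hp]
  push_cast
  field_simp [h2']
  ring_nf
  simp only [show (Complex.I)^3 = -Complex.I from by
      rw [pow_succ, Complex.I_sq]; ring,
    show (Complex.I)^4 = 1 from by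
      rw [show (4:ℕ) = 2+2 from rfl, pow_add, Complex.I_sq]; ring,
    Complex.I_sq]
  ring

/-- For all `λ ∈ ℝ`: `(1 + λ²)²·(1 − Re(u(λ,−λ)·v(λ,−λ))) = (λ² − 3)²·(1 − Re u(λ,−λ))`;
consequently, when `1 − Re u(λ,−λ) ≠ 0`, the weight satisfies
`w(λ, −λ) = (λ² − 3)²/(1 + λ²)²`. -/
theorem weight_symmetric_momenta (lam : ℝ) :
    (1 + lam ^ 2) ^ 2 * (1 - (ufun lam (-lam) * vwfun lam (-lam)).re) =
      (lam ^ 2 - 3) ^ 2 * (1 - (ufun lam (-lam)).re) ∧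
    (1 - (ufun lam (-lam)).re ≠ 0 →
      wfun lam (-lam) = (lam ^ 2 - 3) ^ 2 / (1 + lam ^ 2) ^ 2) := by
  have h2 : ((1:ℝ)+lam^2) ≠ 0 := by positivity
  have hre1 : (ufun lam (-lam)).re = (1 - lam^2)/(1+lam^2) := by
    rw [hu_aux]
    simp only [Complex.add_re, Complex.mul_re, Complex.ofReal_re, Complex.ofReal_im,
      Complex.I_re, Complex.I_im]
    ring
  have hre2 : (ufun lam (-lam) * vwfun lam (-lam)).re =
      ((1-lam^2)^3 - 3*(1-lam^2)*(2*lam)^2)/(1+lam^2)^3 := by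
    rw [huv_aux]
    simp only [Complex.add_re, Complex.mul_re, Complex.ofReal_re, Complex.ofReal_im,
      Complex.I_re, Complex.I_im]
    ring
  have hmain : (1 + lam ^ 2) ^ 2 * (1 - (ufun lam (-lam) * vwfun lam (-lam)).re) =
      (lam ^ 2 - 3) ^ 2 * (1 - (ufun lam (-lam)).re) := by
    rw [hre1, hre2]
    field_simp
    ring
  refine ⟨hmain, fun hne => ?_⟩
  unfold wfun
  rw [div_eq_div_iff hne (by positivity : ((1+lam^2)^2 : ℝ) ≠ 0)]
  linarith [hmain]
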